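/- arXiv:1605.07170 — 4 statements merged into one kernel-verified Lean document; each statement's English description precedes it below -/
import Mathlib

section
/- Let $A, B \subseteq \mathbb{R}^n$ be compact sets, and for $x \in \mathbb{R}^n$ write $A_x = A \cap (A - x)$. Then $\int_{A-A} \mu(A_x + B)\, dx \le \mu(A+B)^2$, where the integral is over the difference set $A - A$ with respect to Lebesgue measure. -/
/-! With `C = A + B`, every `A_x + B` lies in `C ∩ (C - x)`. The integral of `μ (C ∩ (C - x))` over
all `x` is `μ C ^ 2`: it is the `μ × μ`-measure of `{(x, y) | y ∈ C, y + x ∈ C}`, the preimage of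
`C ×ˢ C` under the measure-preserving shear `(x, y) ↦ (y, y + x)`. -/

open MeasureTheory Pointwise

theorem Set.inter_sub_singleton_add_subset {α : Type*} [AddCommGroup α] (s t : Set α) (x : α) :
    (s ∩ (s - {x})) + t ⊆ (s + t) ∩ (s + t - {x}) := by
  rw [← sub_add_eq_add_sub]
  exact Set.inter_add_subset

theorem Set.sub_singleton_eq_preimage_add {α : Type*} [AddGroup α] (s : Set α) (x : α) :
    s - {x} = (· + x) ⁻¹' s := by
  ext y
  simp [Set.sub_singleton, sub_eq_iff_eq_add]

theorem MeasureTheory.lintegral_measure_inter_sub_singleton {G : Type*} [MeasurableSpace G]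
    [AddGroup G] [MeasurableAdd₂ G] (μ : Measure G) [SFinite μ] [μ.IsAddLeftInvariant]
    {s : Set G} (hs : MeasurableSet s) :
    ∫⁻ x, μ (s ∩ (s - {x})) ∂μ = μ s ^ 2 := by
  have hshear := measurePreserving_prod_add_swap μ μ
  calc ∫⁻ x, μ (s ∩ (s - {x})) ∂μ
      = μ.prod μ ((fun z : G × G => (z.2, z.2 + z.1)) ⁻¹' s ×ˢ s) := by
        rw [Measure.prod_apply (hshear.measurable (hs.prod hs))]
        simp only [Set.sub_singleton_eq_preimage_add]
        rfl
    _ = μ s ^ 2 := by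
        rw [hshear.measure_preimage (hs.prod hs).nullMeasurableSet, Measure.prod_prod, sq]

theorem sumset_lintegral_le {n : ℕ} (A B : Set (Fin n → ℝ))
    (hA : IsCompact A) (hB : IsCompact B) :
    ∫⁻ x in A - A, volume ((A ∩ (A - {x})) + B) ≤ volume (A + B) ^ 2 := by
  have hAB : MeasurableSet (A + B) := (hA.add hB).isClosed.measurableSet
  calc ∫⁻ x in A - A, volume ((A ∩ (A - {x})) + B)
      ≤ ∫⁻ x, volume ((A + B) ∩ (A + B - {x})) :=
        (setLIntegral_le_lintegral _ _).trans <| lintegral_mono fun x =>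
          measure_mono (Set.inter_sub_singleton_add_subset A B x)
    _ = volume (A + B) ^ 2 := lintegral_measure_inter_sub_singleton volume hAB
end

section
/- Let $A \subseteq \mathbb{R}^n$ be a compact convex set and let $r \in [0,1]$. Then for every $x \in r \cdot (A - A)$ one has $\mu(A \cap (A - x)) \ge (1-r)^n \mu(A)$. -/
/-!
Write `x = r • (a - b)` with `a, b ∈ A`. By convexity, the homothety of ratio `1 - r` centred
at `b` maps `A` into `A`, and it maps `c` to `(1 - r) • c + r • a - x`, so it also maps `A` into
`A - x`. Its image has volume `(1 - r) ^ n * μ A`.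
-/

open MeasureTheory Pointwise

theorem Convex.vadd_smul_subset_inter_sub {𝕜 E : Type*} [Ring 𝕜] [PartialOrder 𝕜]
    [IsOrderedRing 𝕜] [AddCommGroup E] [Module 𝕜 E] {A : Set E} (hA : Convex 𝕜 A)
    {a b : E} (ha : a ∈ A) (hb : b ∈ A) {r : 𝕜} (hr0 : 0 ≤ r) (hr1 : r ≤ 1) :
    (r • b) +ᵥ (1 - r) • A ⊆ A ∩ (A - {r • (a - b)}) := by
  rintro _ ⟨_, ⟨c, hc, rfl⟩, rfl⟩
  have hcomb : ∀ {d}, d ∈ A → (1 - r) • c + r • d ∈ A := fun hd =>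
    hA hc hd (sub_nonneg.2 hr1) hr0 (sub_add_cancel 1 r)
  refine ⟨by simpa only [vadd_eq_add, add_comm] using hcomb hb, ?_⟩
  refine ⟨(1 - r) • c + r • a, hcomb ha, r • (a - b), rfl, ?_⟩
  simp only [vadd_eq_add, smul_sub]
  abel

theorem convex_inter_sub_volume_lower_general {n : ℕ} (A : Set (Fin n → ℝ))
    (hAconv : Convex ℝ A)
    (r : ℝ) (hr0 : 0 ≤ r) (hr1 : r ≤ 1)
    (x : Fin n → ℝ) (hx : x ∈ r • (A - A)) :
    ENNReal.ofReal ((1 - r) ^ n) * volume A ≤ volume (A ∩ (A - {x})) := by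
  obtain ⟨_, ⟨a, ha, b, hb, rfl⟩, rfl⟩ := hx
  calc ENNReal.ofReal ((1 - r) ^ n) * volume A
      = volume ((r • b) +ᵥ (1 - r) • A) := by
        rw [measure_vadd, Measure.addHaar_smul, Module.finrank_fin_fun,
          abs_of_nonneg (pow_nonneg (sub_nonneg.2 hr1) n)]
    _ ≤ volume (A ∩ (A - {r • (a - b)})) :=
        measure_mono (hAconv.vadd_smul_subset_inter_sub ha hb hr0 hr1)

theorem convex_inter_sub_volume_lower {n : ℕ} (A : Set (Fin n → ℝ))
    (hA : IsCompact A) (hAconv : Convex ℝ A)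
    (r : ℝ) (hr0 : 0 ≤ r) (hr1 : r ≤ 1)
    (x : Fin n → ℝ) (hx : x ∈ r • (A - A)) :
    ENNReal.ofReal ((1 - r) ^ n) * volume A ≤ volume (A ∩ (A - {x})) :=
  convex_inter_sub_volume_lower_general A hAconv r hr0 hr1 x hx
end

section
/- Let $A \subseteq \mathbb{R}^n$ be a compact convex set and let $k$ be an integer with $1 \le k \le n$. Then $\int_{A-A} \mu(A \cap (A - x))^{k/n}\, dx \ge \frac{k!\, n!}{(n+k)!}\, \mu(A)^{k/n}\, \mu(A-A)$, where the integral is over the difference set $A - A$ with respect to Lebesgue measure. -/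
/-!
For `a, b ∈ A` and `s ∈ [0, 1]`, convexity puts the translate `(1 - s) • b + s • A` inside both
`A` and `A - (1 - s) • (a - b)`; hence the covariogram `g x = μ (A ∩ (A - x))` satisfies
`g ((1 - s) • x) ≥ s ^ n μ A` for `x ∈ A - A`. So the superlevel set `{t ≤ (g / μ A) ^ (1 / n)}`
contains `(1 - t) • (A - A)`, of measure `(1 - t) ^ n μ (A - A)`, and the layer-cake formula gives
`∫_{A - A} g ^ (k / n) ≥ μ A ^ (k / n) μ (A - A) · k ∫₀¹ t ^ (k - 1) (1 - t) ^ n dt`,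
a Beta integral equal to `k! n! / (n + k)!`.
-/

open MeasureTheory Pointwise ENNReal Module
open scoped Nat

theorem integral_pow_mul_one_sub_pow (a b : ℕ) :
    ∫ u in (0 : ℝ)..1, u ^ a * (1 - u) ^ b = (a ! * b ! : ℝ) / (a + b + 1)! := by
  have hGamma (m : ℕ) : Complex.Gamma ((m : ℂ) + 1) = (m ! : ℂ) := by
    exact_mod_cast Complex.Gamma_nat_eq_factorial m
  have hbeta : Complex.betaIntegral ((a : ℂ) + 1) ((b : ℂ) + 1)
      = ((∫ u in (0 : ℝ)..1, u ^ a * (1 - u) ^ b : ℝ) : ℂ) := by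
    rw [Complex.betaIntegral, ← intervalIntegral.integral_ofReal]
    refine intervalIntegral.integral_congr fun u _ => ?_
    simp only [add_sub_cancel_right, Complex.cpow_natCast]
    push_cast
    ring
  have key := Complex.Gamma_mul_Gamma_eq_betaIntegral (s := (a : ℂ) + 1) (t := (b : ℂ) + 1)
    (by simp; positivity) (by simp; positivity)
  rw [hbeta, hGamma, hGamma, show (a : ℂ) + 1 + ((b : ℂ) + 1) = ((a + b + 1 : ℕ) : ℂ) + 1 by
    push_cast; ring, hGamma] at key
  rw [_root_.eq_div_iff (by positivity), mul_comm]
  exact_mod_cast key.symm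

theorem factorial_mul_factorial_div_eq_ofReal_mul_lintegral {k : ℕ} (hk : 1 ≤ k) (n : ℕ) :
    (k ! * n ! / (n + k)! : ℝ≥0∞) = ENNReal.ofReal k *
      ∫⁻ t in Set.Ioo (0 : ℝ) 1, ENNReal.ofReal (t ^ (k - 1) * (1 - t) ^ n) := by
  have hint : IntegrableOn (fun t : ℝ => t ^ (k - 1) * (1 - t) ^ n) (Set.Ioo 0 1) :=
    (by fun_prop : Continuous fun t : ℝ => t ^ (k - 1) * (1 - t) ^ n).integrableOn_Icc.mono_set
      Set.Ioo_subset_Icc_self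
  have hnn : 0 ≤ᵐ[volume.restrict (Set.Ioo (0 : ℝ) 1)] fun t => t ^ (k - 1) * (1 - t) ^ n :=
    ae_restrict_of_forall_mem measurableSet_Ioo fun t ht =>
      mul_nonneg (pow_nonneg ht.1.le _) (pow_nonneg (sub_nonneg.2 ht.2.le) _)
  have hk' : (k : ℝ) * (k - 1)! = k ! := by exact_mod_cast Nat.mul_factorial_pred (by omega)
  rw [← ofReal_integral_eq_lintegral_ofReal hint hnn, ← integral_Ioc_eq_integral_Ioo,
    ← intervalIntegral.integral_of_le zero_le_one, integral_pow_mul_one_sub_pow,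
    ← ENNReal.ofReal_mul (Nat.cast_nonneg _), show k - 1 + n + 1 = n + k by omega,
    ← mul_div_assoc, ← mul_assoc, hk', ENNReal.ofReal_div_of_pos (by positivity)]
  norm_cast

theorem factorial_mul_factorial_div_mul_le_lintegral_pow {α : Type*} [MeasurableSpace α]
    {μ : Measure α} {f : α → ℝ} (hf_nn : 0 ≤ᵐ[μ] f) (hf : AEMeasurable f μ) {k : ℕ}
    (hk : 1 ≤ k) (n : ℕ)
    (hlevel : ∀ t ∈ Set.Ioo (0 : ℝ) 1,
      ENNReal.ofReal ((1 - t) ^ n) * μ Set.univ ≤ μ {x | t ≤ f x}) :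
    (k ! * n ! / (n + k)! : ℝ≥0∞) * μ Set.univ ≤ ∫⁻ x, ENNReal.ofReal (f x ^ k) ∂μ := by
  have hlayer := lintegral_rpow_eq_lintegral_meas_le_mul μ hf_nn hf (p := k) (by positivity)
  simp only [Real.rpow_natCast] at hlayer
  calc (k ! * n ! / (n + k)! : ℝ≥0∞) * μ Set.univ
      = ENNReal.ofReal k * ∫⁻ t in Set.Ioo (0 : ℝ) 1,
          ENNReal.ofReal ((1 - t) ^ n) * μ Set.univ * ENNReal.ofReal (t ^ ((k : ℝ) - 1)) := by
        have hexp : ((k : ℝ) - 1) = ((k - 1 : ℕ) : ℝ) := by push_cast [Nat.cast_sub hk]; ring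
        rw [factorial_mul_factorial_div_eq_ofReal_mul_lintegral hk, mul_assoc,
          ← lintegral_mul_const _ (by fun_prop)]
        congr 1
        refine setLIntegral_congr_fun measurableSet_Ioo fun t ht => ?_
        rw [hexp, Real.rpow_natCast, ENNReal.ofReal_mul (pow_nonneg ht.1.le _)]
        ring
    _ ≤ ENNReal.ofReal k * ∫⁻ t in Set.Ioo (0 : ℝ) 1,
          μ {x | t ≤ f x} * ENNReal.ofReal (t ^ ((k : ℝ) - 1)) := by
        gcongr _ * ?_
        exact setLIntegral_mono' measurableSet_Ioo fun t ht => by gcongr; exact hlevel t ht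
    _ ≤ ENNReal.ofReal k * ∫⁻ t in Set.Ioi (0 : ℝ),
          μ {x | t ≤ f x} * ENNReal.ofReal (t ^ ((k : ℝ) - 1)) := by
        gcongr
        exact Set.Ioo_subset_Ioi_self
    _ = ∫⁻ x, ENNReal.ofReal (f x ^ k) ∂μ := hlayer.symm

theorem measurable_measure_inter_sub_singleton {G : Type*} [AddGroup G] [MeasurableSpace G]
    [MeasurableAdd₂ G] (μ : Measure G) [SFinite μ] {A : Set G} (hA : MeasurableSet A) :
    Measurable fun x => μ (A ∩ (A - {x})) := by
  have hS : MeasurableSet {p : G × G | p.2 ∈ A ∧ p.2 + p.1 ∈ A} :=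
    (measurable_snd hA).inter ((measurable_snd.add measurable_fst) hA)
  convert measurable_measure_prodMk_left (ν := μ) hS using 3 with x
  ext y
  simp [Set.sub_singleton, Set.image_sub_right]

section Covariogram

variable {E : Type*} [NormedAddCommGroup E] [NormedSpace ℝ E] [MeasurableSpace E]
  (μ : Measure E) {A : Set E}

theorem Convex.ofReal_pow_finrank_mul_measure_le_measure_inter_sub [BorelSpace E]
    [FiniteDimensional ℝ E] [μ.IsAddHaarMeasure] (hA : Convex ℝ A) {x : E}
    (hx : x ∈ A - A) {t : ℝ} (ht0 : 0 ≤ t) (ht1 : t ≤ 1) :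
    ENNReal.ofReal (t ^ finrank ℝ E) * μ A ≤ μ (A ∩ (A - {(1 - t) • x})) := by
  obtain ⟨a, ha, b, hb, rfl⟩ := hx
  have hsub : (1 - t) • b +ᵥ t • A ⊆ A ∩ (A - {(1 - t) • (a - b)}) := by
    rintro _ ⟨_, ⟨v, hv, rfl⟩, rfl⟩
    change (1 - t) • b + t • v ∈ A ∩ _
    rw [Set.mem_inter_iff, Set.sub_singleton, Set.image_sub_right, Set.mem_preimage]
    constructor
    · convert hA hv hb ht0 (sub_nonneg.2 ht1) (add_sub_cancel t 1) using 1
      abel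
    · convert hA hv ha ht0 (sub_nonneg.2 ht1) (add_sub_cancel t 1) using 1
      module
  calc ENNReal.ofReal (t ^ finrank ℝ E) * μ A = μ ((1 - t) • b +ᵥ t • A) := by
        rw [measure_vadd, Measure.addHaar_smul_of_nonneg μ ht0]
    _ ≤ _ := measure_mono hsub

noncomputable def covariogramRoot (A : Set E) (x : E) : ℝ :=
  ((μ (A ∩ (A - {x})) / μ A) ^ (finrank ℝ E : ℝ)⁻¹).toReal

theorem measurable_covariogramRoot [MeasurableAdd₂ E] [SFinite μ] (hA : MeasurableSet A) :
    Measurable (covariogramRoot μ A) :=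
  (((measurable_measure_inter_sub_singleton μ hA).div_const _).pow_const _).ennreal_toReal

theorem ofReal_covariogramRoot (hA0 : μ A ≠ 0) (hAfin : μ A ≠ ∞) (x : E) :
    ENNReal.ofReal (covariogramRoot μ A x) = (μ (A ∩ (A - {x})) / μ A) ^ (finrank ℝ E : ℝ)⁻¹ :=
  ENNReal.ofReal_toReal <| ENNReal.rpow_ne_top_of_nonneg (by positivity) <|
    ENNReal.div_ne_top (measure_ne_top_of_subset Set.inter_subset_left hAfin) hA0

theorem rpow_mul_ofReal_covariogramRoot_pow (hA0 : μ A ≠ 0) (hAfin : μ A ≠ ∞) (k : ℕ) (x : E) :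
    μ A ^ ((k : ℝ) / finrank ℝ E) * ENNReal.ofReal (covariogramRoot μ A x ^ k) =
      μ (A ∩ (A - {x})) ^ ((k : ℝ) / finrank ℝ E) := by
  rw [ENNReal.ofReal_pow (p := covariogramRoot μ A x) ENNReal.toReal_nonneg,
    ofReal_covariogramRoot μ hA0 hAfin, ← ENNReal.rpow_natCast, ← ENNReal.rpow_mul, inv_mul_eq_div,
    ← ENNReal.mul_rpow_of_nonneg _ _ (by positivity), ENNReal.mul_div_cancel hA0 hAfin]

theorem Convex.le_covariogramRoot [BorelSpace E] [FiniteDimensional ℝ E] [μ.IsAddHaarMeasure]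
    (hA : Convex ℝ A) (hA0 : μ A ≠ 0) (hAfin : μ A ≠ ∞)
    (hd : finrank ℝ E ≠ 0) {x : E} (hx : x ∈ A - A) {t : ℝ} (ht0 : 0 ≤ t) (ht1 : t ≤ 1) :
    t ≤ covariogramRoot μ A ((1 - t) • x) := by
  have hle : ENNReal.ofReal (t ^ finrank ℝ E) ≤ μ (A ∩ (A - {(1 - t) • x})) / μ A :=
    (ENNReal.le_div_iff_mul_le (.inl hA0) (.inl hAfin)).2
      (hA.ofReal_pow_finrank_mul_measure_le_measure_inter_sub μ hx ht0 ht1)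
  have hroot := ENNReal.rpow_le_rpow hle (z := (finrank ℝ E : ℝ)⁻¹) (by positivity)
  rw [← Real.rpow_natCast, ENNReal.ofReal_rpow_of_nonneg (by positivity) (by positivity),
    ← Real.rpow_mul ht0, mul_inv_cancel₀ (by exact_mod_cast hd), Real.rpow_one,
    ← ofReal_covariogramRoot μ hA0 hAfin] at hroot
  exact (ENNReal.ofReal_le_ofReal_iff ENNReal.toReal_nonneg).1 hroot

theorem Convex.ofReal_one_sub_pow_mul_measure_sub_le [BorelSpace E] [FiniteDimensional ℝ E]
    [μ.IsAddHaarMeasure] (hA : Convex ℝ A) (hA0 : μ A ≠ 0)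
    (hAfin : μ A ≠ ∞) (hd : finrank ℝ E ≠ 0) {t : ℝ} (ht0 : 0 ≤ t) (ht1 : t ≤ 1) :
    ENNReal.ofReal ((1 - t) ^ finrank ℝ E) * μ (A - A) ≤
      μ.restrict (A - A) {x | t ≤ covariogramRoot μ A x} := by
  obtain ⟨a, ha⟩ := nonempty_of_measure_ne_zero hA0
  have hsub : (1 - t) • (A - A) ⊆ {x | t ≤ covariogramRoot μ A x} ∩ (A - A) := by
    rintro _ ⟨x, hx, rfl⟩
    exact ⟨hA.le_covariogramRoot μ hA0 hAfin hd hx ht0 ht1, (hA.sub hA).smul_mem_of_zero_mem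
      ⟨a, ha, a, ha, sub_self a⟩ hx ⟨sub_nonneg.2 ht1, sub_le_self 1 ht0⟩⟩
  calc ENNReal.ofReal ((1 - t) ^ finrank ℝ E) * μ (A - A) = μ ((1 - t) • (A - A)) :=
        (Measure.addHaar_smul_of_nonneg μ (sub_nonneg.2 ht1) _).symm
    _ ≤ μ ({x | t ≤ covariogramRoot μ A x} ∩ (A - A)) := measure_mono hsub
    _ ≤ _ := Measure.le_restrict_apply _ _

end Covariogram

theorem lintegral_inter_rpow_lower {n : ℕ} (A : Set (Fin n → ℝ))
    (hA : IsCompact A) (hAconv : Convex ℝ A)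
    (k : ℕ) (hk1 : 1 ≤ k) (hkn : k ≤ n) :
    ((k.factorial : ℝ≥0∞) * n.factorial / (n + k).factorial)
      * volume A ^ ((k : ℝ) / n) * volume (A - A)
      ≤ ∫⁻ x in A - A, volume (A ∩ (A - {x})) ^ ((k : ℝ) / n) := by
  have hn : 0 < n := by omega
  have hd : finrank ℝ (Fin n → ℝ) = n := Module.finrank_fin_fun ℝ
  have hAfin : volume A ≠ ∞ := hA.measure_lt_top.ne
  rcases eq_or_ne (volume A) 0 with hA0 | hA0
  · rw [hA0, ENNReal.zero_rpow_of_pos (by positivity), mul_zero, zero_mul]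
    positivity
  have hlevel (t : ℝ) (ht : t ∈ Set.Ioo (0 : ℝ) 1) :
      ENNReal.ofReal ((1 - t) ^ n) * volume.restrict (A - A) Set.univ ≤
        volume.restrict (A - A) {x | t ≤ covariogramRoot volume A x} := by
    simpa only [hd, Measure.restrict_apply_univ] using
      hAconv.ofReal_one_sub_pow_mul_measure_sub_le volume hA0 hAfin (by omega) ht.1.le ht.2.le
  have hbound := factorial_mul_factorial_div_mul_le_lintegral_pow (f := covariogramRoot volume A)
    (ae_of_all _ fun _ => ENNReal.toReal_nonneg)
    (measurable_covariogramRoot volume hA.isClosed.measurableSet).aemeasurable hk1 n hlevel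
  rw [Measure.restrict_apply_univ] at hbound
  calc _ = volume A ^ ((k : ℝ) / n) *
        ((k ! * n ! / (n + k)! : ℝ≥0∞) * volume (A - A)) := by ring
    _ ≤ volume A ^ ((k : ℝ) / n) *
        ∫⁻ x in A - A, ENNReal.ofReal (covariogramRoot volume A x ^ k) := by gcongr
    _ = _ := by
      rw [← lintegral_const_mul' _ _ (ENNReal.rpow_ne_top_of_nonneg (by positivity) hAfin)]
      congr with x
      simpa only [hd] using rpow_mul_ofReal_covariogramRoot_pow volume hA0 hAfin k x
end

section
/- Let $L > 0$ and let $A_L = \{(x_1, \dots, x_n) \in \mathbb{R}^n : x_j \ge 0 \text{ for all } j, \ \sum_{j=1}^n x_j \le L\}$ be the $n$-dimensional simplex of side $L$. Then $\mu(A_L + A_L) = 2^n \mu(A_L)$ and $\mu(A_L - A_L) = \binom{2n}{n} \mu(A_L)$, where $\mu(A_L) = L^n/n!$. -/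
/-!
A convex set satisfies `A + A = 2 • A`, and the dilation by `2` multiplies Lebesgue measure by `2ⁿ`.

For the rest, cut `ℝⁿ` into the `2ⁿ` closed orthants, which overlap only in coordinate hyperplanes.
In the orthant where the coordinates in `s` are nonnegative and the others nonpositive, `A_L - A_L`
is the product of the simplex of side `L` in the coordinates of `s` and the reflected simplex of
side `L` in the others, of volume `L^k/k! · L^(n-k)/(n-k)! = C(n,k) Lⁿ/n!` with `k = |s|`; and
`∑ₖ C(n,k)² = C(2n,n)`. The same decomposition of the `ℓ¹` ball, of volume `2ⁿ Lⁿ/n!`, into `2ⁿ`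
reflected copies of `A_L` gives `μ(A_L) = Lⁿ/n!`.
-/

open MeasureTheory Pointwise
open scoped Nat

theorem Convex.addHaar_add_self {E : Type*} [NormedAddCommGroup E] [NormedSpace ℝ E]
    [MeasurableSpace E] [BorelSpace E] [FiniteDimensional ℝ E] (μ : Measure E)
    [μ.IsAddHaarMeasure] {s : Set E} (hs : Convex ℝ s) :
    μ (s + s) = 2 ^ Module.finrank ℝ E * μ s := by
  rw [← one_smul ℝ s, ← hs.add_smul zero_le_one zero_le_one, one_smul,
    Measure.addHaar_smul, one_add_one_eq_two, abs_of_nonneg (by positivity),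
    ENNReal.ofReal_pow zero_le_two, ENNReal.ofReal_ofNat]

theorem pow_div_factorial_mul_pow_div_factorial {k n : ℕ} (hk : k ≤ n) (L : ℝ) :
    L ^ k / k ! * (L ^ (n - k) / (n - k)!) = n.choose k * (L ^ n / n !) := by
  rw [Nat.cast_choose ℝ hk]
  field_simp
  rw [← pow_add, Nat.add_sub_cancel' hk]

variable {ι : Type*}

theorem sum_finset_choose_card [Fintype ι] :
    ∑ s : Finset ι, (Fintype.card ι).choose s.card =
      (2 * Fintype.card ι).choose (Fintype.card ι) := by
  rw [← Finset.powerset_univ, Finset.sum_powerset_apply_card, Finset.card_univ]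
  simp [← sq, Nat.sum_range_choose_sq]

theorem sum_subtype_le_sum {M : Type*} [AddCommMonoid M] [PartialOrder M] [IsOrderedAddMonoid M]
    [Fintype ι] {f : ι → M} (hf : ∀ j, 0 ≤ f j) (p : ι → Prop) [Fintype {j // p j}] :
    ∑ i : {j // p j}, f i ≤ ∑ j, f j := by
  classical
  rw [← Finset.sum_subtype {j | p j} (by simp)]
  exact Finset.sum_le_univ_sum_of_nonneg hf

theorem sum_ite_eq_sum_subtype {M : Type*} [AddCommMonoid M] [Fintype ι] (p : ι → Prop)
    [DecidablePred p] [Fintype {j // p j}] (f : ι → M) :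
    ∑ j, (if p j then f j else 0) = ∑ i : {j // p j}, f i := by
  rw [← Finset.sum_filter, Finset.sum_subtype _ Finset.mem_filter_univ]

def orthant (s : Finset ι) : Set (ι → ℝ) := {x | ∀ j, (j ∈ s → 0 ≤ x j) ∧ (j ∉ s → x j ≤ 0)}

section signFlip
variable [DecidableEq ι]

def signFlip (s : Finset ι) (x : ι → ℝ) : ι → ℝ := fun j => if j ∈ s then x j else -x j

theorem mem_orthant_iff {s : Finset ι} {x : ι → ℝ} :
    x ∈ orthant s ↔ ∀ j, 0 ≤ signFlip s x j := by
  refine forall_congr' fun j => ?_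
  by_cases hj : j ∈ s <;> simp [signFlip, hj]

theorem abs_eq_signFlip {s : Finset ι} {x : ι → ℝ} (hx : x ∈ orthant s) (j : ι) :
    |x j| = signFlip s x j := by
  by_cases hj : j ∈ s
  · simp [signFlip, hj, abs_of_nonneg ((hx j).1 hj)]
  · simp [signFlip, hj, abs_of_nonpos ((hx j).2 hj)]

theorem measurePreserving_signFlip [Fintype ι] (s : Finset ι) :
    MeasurePreserving (signFlip s) volume volume :=
  volume_preserving_pi (f := fun j (t : ℝ) => if j ∈ s then t else -t) fun j => by
    by_cases hj : j ∈ s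
    · simp only [hj, if_true]; exact .id volume
    · simpa [hj] using Measure.measurePreserving_neg volume

end signFlip

section
variable [Fintype ι]

theorem iUnion_orthant : ⋃ s : Finset ι, orthant s = Set.univ := by
  classical
  refine Set.eq_univ_of_forall fun x => Set.mem_iUnion.2 ⟨({j | 0 ≤ x j} : Finset ι), fun j => ?_⟩
  simpa using le_of_not_ge

theorem aedisjoint_orthant {s t : Finset ι} (hst : s ≠ t) :
    AEDisjoint volume (orthant s) (orthant t) := by
  obtain ⟨j, hj⟩ : ∃ j, ¬(j ∈ s ↔ j ∈ t) := by
    by_contra! h; exact hst (Finset.ext h)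
  refine measure_mono_null (fun x ⟨hs, ht⟩ => ?_) (Measure.pi_hyperplane (fun _ => volume) j 0)
  obtain ⟨hs₁, hs₂⟩ := hs j
  obtain ⟨ht₁, ht₂⟩ := ht j
  by_cases hjs : j ∈ s
  · exact le_antisymm (ht₂ (by tauto)) (hs₁ hjs)
  · exact le_antisymm (hs₂ hjs) (ht₁ (by tauto))

theorem volume_eq_sum_volume_inter_orthant {D : Set (ι → ℝ)}
    (hD : ∀ s, NullMeasurableSet (D ∩ orthant s)) :
    volume D = ∑ s : Finset ι, volume (D ∩ orthant s) := by
  rw [← tsum_fintype (L := .unconditional _),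
    ← measure_iUnion₀ (f := fun s => D ∩ orthant s)
      (fun _ _ hst => (aedisjoint_orthant hst).mono Set.inter_subset_right Set.inter_subset_right)
      hD,
    ← Set.inter_iUnion, iUnion_orthant, Set.inter_univ]

variable (ι) in
def cornerSimplex (L : ℝ) : Set (ι → ℝ) := {x | (∀ j, 0 ≤ x j) ∧ ∑ j, x j ≤ L}

theorem measurableSet_cornerSimplex (L : ℝ) : MeasurableSet (cornerSimplex ι L) :=
  (measurableSet_Ici (a := 0)).inter <|
    measurableSet_le (Finset.measurable_sum _ fun j _ => measurable_pi_apply j) measurable_const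

theorem convex_cornerSimplex (L : ℝ) : Convex ℝ (cornerSimplex ι L) :=
  (convex_Ici 0).inter <| convex_halfSpace_le
    ⟨fun _ _ => Finset.sum_add_distrib, fun _ _ => (Finset.mul_sum ..).symm⟩ L

theorem sum_abs_le_inter_orthant [DecidableEq ι] (s : Finset ι) (r : ℝ) :
    {x : ι → ℝ | ∑ j, |x j| ≤ r} ∩ orthant s = signFlip s ⁻¹' cornerSimplex ι r := by
  ext x
  refine ⟨fun ⟨hr, hx⟩ => ⟨mem_orthant_iff.1 hx, ?_⟩, fun ⟨hx, hr⟩ => ⟨?_, mem_orthant_iff.2 hx⟩⟩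
  · simpa only [Set.mem_ofPred_eq, abs_eq_signFlip hx] using hr
  · simpa only [Set.mem_ofPred_eq, abs_eq_signFlip (mem_orthant_iff.2 hx)] using hr

theorem volume_sum_abs_le [Nonempty ι] (r : ℝ) :
    volume {x : ι → ℝ | ∑ j, |x j| ≤ r} =
      ENNReal.ofReal r ^ Fintype.card ι *
        ENNReal.ofReal (2 ^ Fintype.card ι / (Fintype.card ι)!) := by
  simpa [one_add_one_eq_two, Real.Gamma_two, Real.Gamma_nat_eq_factorial] using
    volume_sum_rpow_le (ι := ι) le_rfl r

theorem volume_cornerSimplex {L : ℝ} (hL : 0 ≤ L) :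
    volume (cornerSimplex ι L) = ENNReal.ofReal (L ^ Fintype.card ι / (Fintype.card ι)!) := by
  classical
  cases isEmpty_or_nonempty ι
  · have : cornerSimplex ι L = Set.univ := by ext x; simp [cornerSimplex, hL]
    simp [this, volume_pi]
  · have hpiece (s : Finset ι) :
        volume ({x : ι → ℝ | ∑ j, |x j| ≤ L} ∩ orthant s) = volume (cornerSimplex ι L) := by
      rw [sum_abs_le_inter_orthant, (measurePreserving_signFlip s).measure_preimage
        (measurableSet_cornerSimplex L).nullMeasurableSet]
    have hball := volume_eq_sum_volume_inter_orthant
        (D := {x : ι → ℝ | ∑ j, |x j| ≤ L}) fun s => by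
      rw [sum_abs_le_inter_orthant]
      exact ((measurableSet_cornerSimplex L).preimage
        (measurePreserving_signFlip s).measurable).nullMeasurableSet
    rw [volume_sum_abs_le, Finset.sum_congr rfl fun s _ => hpiece s, Finset.sum_const,
      Finset.card_univ, Fintype.card_finset, nsmul_eq_mul] at hball
    rw [← ENNReal.ofReal_pow hL, ← ENNReal.ofReal_mul (by positivity), mul_div_left_comm,
      ENNReal.ofReal_mul (by positivity), ENNReal.ofReal_pow zero_le_two, ENNReal.ofReal_ofNat,
      Nat.cast_pow, Nat.cast_ofNat] at hball
    exact ((ENNReal.mul_right_inj (by positivity) (by simp)).1 hball).symm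

theorem cornerSimplex_sub_inter_orthant [DecidableEq ι] (s : Finset ι) (L : ℝ) :
    (cornerSimplex ι L - cornerSimplex ι L) ∩ orthant s =
      MeasurableEquiv.piEquivPiSubtypeProd (fun _ => ℝ) (· ∈ s) ⁻¹'
        (cornerSimplex {j // j ∈ s} L ×ˢ (-cornerSimplex {j // j ∉ s} L)) := by
  ext x
  simp only [Set.mem_inter_iff, Set.mem_preimage, MeasurableEquiv.piEquivPiSubtypeProd_apply,
    Set.mem_prod, Set.mem_neg, cornerSimplex, Set.mem_ofPred_eq, Pi.neg_apply, Set.mem_sub]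
  constructor
  · rintro ⟨⟨a, ⟨ha, haL⟩, b, ⟨hb, hbL⟩, rfl⟩, hx⟩
    refine ⟨⟨fun i => (hx i).1 i.2, ?_⟩, fun i => neg_nonneg.2 ((hx i).2 i.2), ?_⟩
    · calc ∑ i : {j // j ∈ s}, (a - b) i ≤ ∑ i : {j // j ∈ s}, a i :=
            Finset.sum_le_sum fun i _ => sub_le_self _ (hb i)
        _ ≤ L := (sum_subtype_le_sum ha _).trans haL
    · calc ∑ i : {j // j ∉ s}, -(a - b) i ≤ ∑ i : {j // j ∉ s}, b i :=
            Finset.sum_le_sum fun i _ => by simpa using ha i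
        _ ≤ L := (sum_subtype_le_sum hb _).trans hbL
  · rintro ⟨⟨hpos, hposL⟩, hneg, hnegL⟩
    refine ⟨⟨fun j => if j ∈ s then x j else 0, ⟨fun j => ?_, ?_⟩,
      fun j => if j ∉ s then -x j else 0, ⟨fun j => ?_, ?_⟩, funext fun j => ?_⟩,
      fun j => ⟨fun hj => hpos ⟨j, hj⟩, fun hj => neg_nonneg.1 (hneg ⟨j, hj⟩)⟩⟩
    · dsimp only; split_ifs with hj
      exacts [hpos ⟨j, hj⟩, le_rfl]
    · rwa [sum_ite_eq_sum_subtype]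
    · dsimp only; split_ifs with hj
      exacts [le_rfl, hneg ⟨j, hj⟩]
    · rwa [sum_ite_eq_sum_subtype]
    · by_cases hj : j ∈ s <;> simp [hj]

theorem volume_cornerSimplex_sub {L : ℝ} (hL : 0 ≤ L) :
    volume (cornerSimplex ι L - cornerSimplex ι L) =
      (2 * Fintype.card ι).choose (Fintype.card ι) * volume (cornerSimplex ι L) := by
  classical
  have hprod (s : Finset ι) : MeasurableSet
      (cornerSimplex {j // j ∈ s} L ×ˢ (-cornerSimplex {j // j ∉ s} L)) :=
    (measurableSet_cornerSimplex L).prod (measurableSet_cornerSimplex L).neg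
  have hpiece (s : Finset ι) : volume ((cornerSimplex ι L - cornerSimplex ι L) ∩ orthant s) =
      (Fintype.card ι).choose s.card * volume (cornerSimplex ι L) := by
    rw [cornerSimplex_sub_inter_orthant,
      (volume_preserving_piEquivPiSubtypeProd _ _).measure_preimage (hprod s).nullMeasurableSet,
      Measure.volume_eq_prod, Measure.prod_prod, Measure.measure_neg,
      -- the measure on `s → ℝ` is built from `Subtype.fintype`, the simplex from
      -- `Finset.Subtype.fintype`
      Subsingleton.elim (Subtype.fintype (· ∈ s)) (Finset.Subtype.fintype s),
      volume_cornerSimplex hL, volume_cornerSimplex hL, volume_cornerSimplex hL,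
      Fintype.card_coe, Fintype.card_subtype_compl, Fintype.card_coe,
      ← ENNReal.ofReal_mul (by positivity), pow_div_factorial_mul_pow_div_factorial s.card_le_univ,
      ENNReal.ofReal_mul (by positivity), ENNReal.ofReal_natCast]
  rw [volume_eq_sum_volume_inter_orthant fun s => by
      rw [cornerSimplex_sub_inter_orthant]
      exact ((hprod s).preimage (MeasurableEquiv.measurable _)).nullMeasurableSet,
    Finset.sum_congr rfl fun s _ => hpiece s, ← Finset.sum_mul, ← Nat.cast_sum,
    sum_finset_choose_card]
end

theorem simplex_sumset_diffset_volume {n : ℕ} (L : ℝ) (hL : 0 < L)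
    (A : Set (Fin n → ℝ))
    (hA : A = {x : Fin n → ℝ | (∀ j, 0 ≤ x j) ∧ ∑ j, x j ≤ L}) :
    volume (A + A) = 2 ^ n * volume A ∧
    volume (A - A) = (Nat.choose (2 * n) n) * volume A ∧
    volume A = ENNReal.ofReal (L ^ n / n.factorial) := by
  obtain rfl : A = cornerSimplex (Fin n) L := hA
  refine ⟨?_, ?_, ?_⟩
  · simpa using (convex_cornerSimplex (ι := Fin n) L).addHaar_add_self volume
  · simpa using volume_cornerSimplex_sub (ι := Fin n) hL.le
  · simpa using volume_cornerSimplex (ι := Fin n) hL.le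
end
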